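/- arXiv:2512.10663 — 2 statements merged into one kernel-verified Lean document; each statement's English description precedes it below -/
import Mathlib

section
/- Let d1, d2, d3 be integers with d1 ≥ 2, d2 ≥ 3, d3 ≥ 3. Then the central charges satisfy 3 − 6/d1 = (3 − 6/d2) + (3 − 6/d3) in ℚ if and only if, up to exchanging d2 and d3, one has (d1, d2, d3) = (6, 3, 3), or (d1, d2, d3) = (12, 3, 4), or (d1, d2, d3) = (30, 3, 5). -/
/-- The central charges `c_d = 3 - 6/d` of the N=2 minimal quotients satisfy
`c_{d1} = c_{d2} + c_{d3}` (with `d1 ≥ 2`, `d2, d3 ≥ 3`) exactly for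
`(d1, d2, d3) = (6, 3, 3)`, `(12, 3, 4)`, `(30, 3, 5)`, up to exchanging `d2` and `d3`. -/
theorem central_charge_sum_classification (d1 d2 d3 : ℤ)
    (h1 : 2 ≤ d1) (h2 : 3 ≤ d2) (h3 : 3 ≤ d3) :
    (3 - 6 / (d1 : ℚ) = (3 - 6 / (d2 : ℚ)) + (3 - 6 / (d3 : ℚ))) ↔
      ((d1 = 6 ∧ d2 = 3 ∧ d3 = 3) ∨
       (d1 = 12 ∧ d2 = 3 ∧ d3 = 4) ∨ (d1 = 12 ∧ d2 = 4 ∧ d3 = 3) ∨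
       (d1 = 30 ∧ d2 = 3 ∧ d3 = 5) ∨ (d1 = 30 ∧ d2 = 5 ∧ d3 = 3)) := by
  have n1 : (d1 : ℚ) ≠ 0 := by exact_mod_cast (by omega : d1 ≠ 0)
  have n2 : (d2 : ℚ) ≠ 0 := by exact_mod_cast (by omega : d2 ≠ 0)
  have n3 : (d3 : ℚ) ≠ 0 := by exact_mod_cast (by omega : d3 ≠ 0)
  constructor
  · intro h
    field_simp at h
    have key : 2 * d1 * d3 + 2 * d1 * d2 - 2 * d2 * d3 = d1 * d2 * d3 := by
      have : ((2 * d1 * d3 + 2 * d1 * d2 - 2 * d2 * d3 : ℤ) : ℚ)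
          = ((d1 * d2 * d3 : ℤ) : ℚ) := by push_cast; linarith
      exact_mod_cast this
    have hb2 : d2 ≤ 5 := by
      by_contra hc
      push_neg at hc
      nlinarith [mul_nonneg (mul_nonneg (by omega : (0:ℤ) ≤ d1) (by omega : (0:ℤ) ≤ d3)) (by omega : (0:ℤ) ≤ d2 - 6),
        mul_nonneg (mul_nonneg (by omega : (0:ℤ) ≤ d1) (by omega : (0:ℤ) ≤ d2)) (by omega : (0:ℤ) ≤ d3 - 3),
        mul_pos (by omega : (0:ℤ) < d2) (by omega : (0:ℤ) < d3)]
    have hb3 : d3 ≤ 5 := by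
      by_contra hc
      push_neg at hc
      nlinarith [mul_nonneg (mul_nonneg (by omega : (0:ℤ) ≤ d1) (by omega : (0:ℤ) ≤ d2)) (by omega : (0:ℤ) ≤ d3 - 6),
        mul_nonneg (mul_nonneg (by omega : (0:ℤ) ≤ d1) (by omega : (0:ℤ) ≤ d3)) (by omega : (0:ℤ) ≤ d2 - 3),
        mul_pos (by omega : (0:ℤ) < d2) (by omega : (0:ℤ) < d3)]
    interval_cases d2 <;> interval_cases d3 <;> omega
  · rintro (⟨e1, e2, e3⟩ | ⟨e1, e2, e3⟩ | ⟨e1, e2, e3⟩ | ⟨e1, e2, e3⟩ | ⟨e1, e2, e3⟩) <;>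
      subst e1 <;> subst e2 <;> subst e3 <;> norm_num
end

section
/- Let r, p be integers with 1 ≤ r ≤ 29, −r ≤ p ≤ r − 1, and p + r odd. Then both j_{p,r} = p/30 + (1 + (−1)^{p+r})/4 and Δ_{p,r} = (r² − p² − 1)/120 + (1 + (−1)^{r+p})/16 are integers if and only if (p, r) ∈ {(0, 1), (0, 11), (0, 19), (0, 29)}; moreover the corresponding conformal weights are Δ_{0,1} = 0, Δ_{0,11} = 1, Δ_{0,19} = 3, and Δ_{0,29} = 7. -/
/-- For `d = 30`: with `1 ≤ r ≤ 29`, `-r ≤ p ≤ r - 1` and `p + r` odd, both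
`j_{p,r} = p/30 + (1 + (-1)^(p+r))/4` and `Δ_{p,r} = (r² - p² - 1)/120 + (1 + (-1)^(r+p))/16`
are integers iff `(p, r) ∈ {(0,1), (0,11), (0,19), (0,29)}`; moreover the corresponding
conformal weights are `Δ_{0,1} = 0`, `Δ_{0,11} = 1`, `Δ_{0,19} = 3`, `Δ_{0,29} = 7`. -/
theorem integral_weights_M30 (r p : ℤ)
    (hr1 : 1 ≤ r) (hr2 : r ≤ 29) (hp1 : -r ≤ p) (hp2 : p ≤ r - 1)
    (hodd : Odd (p + r)) :
    (((∃ a : ℤ, (p : ℚ) / 30 + (1 + (-1 : ℚ) ^ (p + r)) / 4 = (a : ℚ)) ∧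
      (∃ b : ℤ, ((r : ℚ) ^ 2 - (p : ℚ) ^ 2 - 1) / 120
         + (1 + (-1 : ℚ) ^ (r + p)) / 16 = (b : ℚ))) ↔
      ((p = 0 ∧ r = 1) ∨ (p = 0 ∧ r = 11) ∨ (p = 0 ∧ r = 19) ∨ (p = 0 ∧ r = 29))) ∧
    (((1 : ℚ) ^ 2 - (0 : ℚ) ^ 2 - 1) / 120 + (1 + (-1 : ℚ) ^ ((1 : ℤ) + 0)) / 16 = 0) ∧
    (((11 : ℚ) ^ 2 - (0 : ℚ) ^ 2 - 1) / 120 + (1 + (-1 : ℚ) ^ ((11 : ℤ) + 0)) / 16 = 1) ∧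
    (((19 : ℚ) ^ 2 - (0 : ℚ) ^ 2 - 1) / 120 + (1 + (-1 : ℚ) ^ ((19 : ℤ) + 0)) / 16 = 3) ∧
    (((29 : ℚ) ^ 2 - (0 : ℚ) ^ 2 - 1) / 120 + (1 + (-1 : ℚ) ^ ((29 : ℤ) + 0)) / 16 = 7) := by
  have hodd' : Odd (r + p) := by rwa [add_comm]
  rw [hodd.neg_one_zpow, hodd'.neg_one_zpow]
  refine ⟨⟨?_, ?_⟩, by norm_num, by norm_num, by norm_num, by norm_num⟩
  · rintro ⟨⟨a, ha⟩, ⟨b, hb⟩⟩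
    have hpa : (p : ℚ) = 30 * a := by
      field_simp at ha; linarith
    have hpz : p = 30 * a := by exact_mod_cast hpa
    have hp0 : p = 0 := by omega
    subst hp0
    have hbq : (r : ℚ) ^ 2 - 1 = 120 * b := by
      field_simp at hb; push_cast at hb; linarith
    have hbz : r * r - 1 = 120 * b := by
      have : (r : ℤ) ^ 2 - 1 = 120 * b := by exact_mod_cast hbq
      linarith [sq r ▸ this, (sq r).symm]
    interval_cases r <;> omega
  · rintro (⟨hp, hr⟩ | ⟨hp, hr⟩ | ⟨hp, hr⟩ | ⟨hp, hr⟩) <;> subst hp <;> subst hr <;>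
      refine ⟨⟨0, by norm_num⟩, ?_⟩
    exacts [⟨0, by norm_num⟩, ⟨1, by norm_num⟩, ⟨3, by norm_num⟩, ⟨7, by norm_num⟩]
end
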